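/- arXiv:1409.0125 — 2 statements merged into one kernel-verified Lean document; each statement's English description precedes it below -/
import Mathlib

section
/- Let P be a minimal pattern group of depth d with m = |St_P(d-1)|. Then for every n > d, the order of the restriction of G_P to X^[n] is |G_P|_{X^[n]}| = |P| · m^{|X| + |X|^2 + ... + |X|^{n-d}}. -/
open List

/-- The group of automorphisms of the rooted tree `X*` (vertices = words over `X`,
root = empty word, edges `(v, vx)`), as a subgroup of the permutations of `List X`. -/
def treeAut (X : Type*) : Subgroup (Equiv.Perm (List X)) where
  carrier := {f | f [] = [] ∧ ∀ (v : List X) (x : X), ∃ y : X, f (v ++ [x]) = f v ++ [y]}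
  one_mem' := ⟨rfl, fun _ x => ⟨x, rfl⟩⟩
  mul_mem' := by
    rintro f g ⟨hf0, hf⟩ ⟨hg0, hg⟩
    refine ⟨by simp [Equiv.Perm.mul_apply, hg0, hf0], fun v x => ?_⟩
    obtain ⟨y, hy⟩ := hg v x
    obtain ⟨z, hz⟩ := hf (g v) y
    exact ⟨z, by simp [Equiv.Perm.mul_apply, hy, hz]⟩
  inv_mem' := by
    rintro f ⟨hf0, hf⟩
    have h0 : f⁻¹ [] = ([] : List _) := by
      have h : f⁻¹ (f []) = [] := by simp
      rwa [hf0] at h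
    refine ⟨h0, fun v x => ?_⟩
    rcases List.eq_nil_or_concat (f⁻¹ (v ++ [x])) with h | ⟨w, z, hw⟩
    · exfalso
      have h1 : v ++ [x] = f ([] : List _) := by
        have := congrArg (fun t => f t) h
        simpa using this
      rw [hf0] at h1
      simp at h1
    · rw [List.concat_eq_append] at hw
      obtain ⟨y, hy⟩ := hf w z
      have h2 : f w ++ [y] = v ++ [x] := by
        rw [← hy]
        have := congrArg (fun t => f t) hw
        simpa using this.symm
      have h3 := (List.append_inj' h2 rfl).1
      have h4 : w = f⁻¹ v := by rw [← h3]; simp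
      exact ⟨z, by rw [hw, h4]⟩

theorem treeAut.length_apply {X : Type*} {f : Equiv.Perm (List X)} (hf : f ∈ treeAut X)
    (v : List X) : (f v).length = v.length := by
  induction v using List.reverseRecOn with
  | nil => simp [hf.1]
  | append_singleton v x ih =>
      obtain ⟨y, hy⟩ := hf.2 v x
      simp [hy, ih]

/-- The section function: `sectFun f v w` is the word `u` with `f (v ++ w) = f v ++ u`. -/
def sectFun {X : Type*} (f : Equiv.Perm (List X)) (v w : List X) : List X :=
  (f (v ++ w)).drop v.length

theorem treeAut.apply_append {X : Type*} {f : Equiv.Perm (List X)} (hf : f ∈ treeAut X)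
    (v w : List X) : f (v ++ w) = f v ++ sectFun f v w := by
  have hpre : f v <+: f (v ++ w) := by
    induction w using List.reverseRecOn with
    | nil => simp
    | append_singleton w x ih =>
        obtain ⟨y, hy⟩ := hf.2 (v ++ w) x
        rw [← List.append_assoc, hy]
        exact ih.trans (List.prefix_append _ _)
  obtain ⟨t, ht⟩ := hpre
  have hd : sectFun f v w = t := by
    simp only [sectFun]
    rw [← ht, ← treeAut.length_apply hf v, List.drop_left]
  rw [hd, ht]

/-- The section of a tree automorphism `g` at a vertex `v`, as a tree automorphism. -/
def sect {X : Type*} (g : ↥(treeAut X)) (v : List X) : ↥(treeAut X) := by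
  refine ⟨{ toFun := sectFun (g : Equiv.Perm (List X)) v
            invFun := sectFun ((g : Equiv.Perm (List X))⁻¹) ((g : Equiv.Perm (List X)) v)
            left_inv := ?_
            right_inv := ?_ }, ?_, ?_⟩
  · intro w
    show sectFun _ _ (sectFun _ _ _) = w
    have ha := treeAut.apply_append g.2 v w
    simp only [sectFun] at ha ⊢
    rw [← ha, Equiv.Perm.coe_inv, Equiv.symm_apply_apply, treeAut.length_apply g.2, List.drop_left]
  · intro w
    have hginv : (g : Equiv.Perm (List X))⁻¹ ∈ treeAut X := (treeAut X).inv_mem g.2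
    show sectFun _ _ (sectFun _ _ _) = w
    have key : (v : List X) ++ sectFun ((g : Equiv.Perm (List X))⁻¹) ((g : Equiv.Perm (List X)) v) w
        = (g : Equiv.Perm (List X))⁻¹ ((g : Equiv.Perm (List X)) v ++ w) := by
      have h1 := treeAut.apply_append hginv ((g : Equiv.Perm (List X)) v) w
      have h2 : (g : Equiv.Perm (List X))⁻¹ ((g : Equiv.Perm (List X)) v) = v := by simp
      rw [h1, h2]
    simp only [sectFun]
    simp only [sectFun] at key
    rw [key]
    simp [treeAut.length_apply g.2]
  · show sectFun _ _ [] = []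
    simp only [sectFun, List.append_nil]
    exact List.drop_eq_nil_of_le (le_of_eq (treeAut.length_apply g.2 v))
  · intro w x
    show ∃ y, sectFun _ _ (w ++ [x]) = sectFun _ _ w ++ [y]
    obtain ⟨y, hy⟩ := g.2.2 (v ++ w) x
    refine ⟨y, ?_⟩
    simp only [sectFun]
    rw [← List.append_assoc, hy, List.drop_append_of_le_length]
    rw [treeAut.length_apply g.2]
    simp

theorem sect_apply {X : Type*} (g : ↥(treeAut X)) (v w : List X) :
    ((sect g v : ↥(treeAut X)) : Equiv.Perm (List X)) w
      = sectFun (g : Equiv.Perm (List X)) v w := rfl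

theorem sect_nil {X : Type*} (g : ↥(treeAut X)) : sect g [] = g := by
  apply Subtype.ext
  apply Equiv.ext
  intro w
  rw [sect_apply]
  simp [sectFun]

theorem sect_append {X : Type*} (g : ↥(treeAut X)) (v u : List X) :
    sect g (v ++ u) = sect (sect g v) u := by
  apply Subtype.ext
  apply Equiv.ext
  intro w
  show sectFun (g : Equiv.Perm (List X)) (v ++ u) w
    = sectFun ((sect g v : ↥(treeAut X)) : Equiv.Perm (List X)) u w
  simp only [sectFun, sect_apply]
  rw [List.append_assoc, List.drop_drop, List.length_append, Nat.add_comm]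

theorem sect_one {X : Type*} (v : List X) : sect (1 : ↥(treeAut X)) v = 1 := by
  apply Subtype.ext
  apply Equiv.ext
  intro w
  rw [sect_apply]
  simp [sectFun]

theorem sect_mul {X : Type*} (g h : ↥(treeAut X)) (v : List X) :
    sect (g * h) v = sect g ((h : Equiv.Perm (List X)) v) * sect h v := by
  apply Subtype.ext
  apply Equiv.ext
  intro w
  show (((g * h : ↥(treeAut X)) : Equiv.Perm (List X)) (v ++ w)).drop v.length
      = ((g : Equiv.Perm (List X)) ((h : Equiv.Perm (List X)) v
          ++ sectFun (h : Equiv.Perm (List X)) v w)).drop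
            ((h : Equiv.Perm (List X)) v).length
  have hcoe : ((g * h : ↥(treeAut X)) : Equiv.Perm (List X)) (v ++ w)
      = (g : Equiv.Perm (List X)) ((h : Equiv.Perm (List X)) (v ++ w)) := rfl
  have hh := treeAut.apply_append h.2 v w
  rw [hcoe, hh, treeAut.length_apply h.2]

theorem sect_inv {X : Type*} (g : ↥(treeAut X)) (v : List X) :
    sect g⁻¹ v = (sect g (((g : Equiv.Perm (List X))⁻¹) v))⁻¹ := by
  have h1 : sect (g * g⁻¹) v = 1 := by rw [mul_inv_cancel, sect_one]
  have h2 := (sect_mul g g⁻¹ v).symm.trans h1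
  exact eq_inv_of_mul_eq_one_right h2

/-- The automorphism group of the finite subtree `X^[d]` of words of length at most `d`
is modelled inside the permutations of the set of such words. -/
abbrev Pat (X : Type*) (d : ℕ) := Equiv.Perm {l : List X // l.length ≤ d}

/-- The restriction homomorphism `Aut X* → Sym(X^[d])`. -/
def restr (X : Type*) (d : ℕ) : ↥(treeAut X) →* Pat X d where
  toFun g :=
    { toFun := fun w => ⟨(g : Equiv.Perm (List X)) w.1,
        by rw [treeAut.length_apply g.2]; exact w.2⟩
      invFun := fun w => ⟨(g : Equiv.Perm (List X))⁻¹ w.1,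
        by rw [treeAut.length_apply ((treeAut X).inv_mem g.2)]; exact w.2⟩
      left_inv := fun w => by
        apply Subtype.ext
        simp
      right_inv := fun w => by
        apply Subtype.ext
        simp }
  map_one' := by
    apply Equiv.ext
    intro w
    rfl
  map_mul' := fun g h => by
    apply Equiv.ext
    intro w
    rfl

/-- `Aut X^[d]`: the automorphism group of the finite tree `X^[d]`, realized as the
image of `Aut X*` under restriction (every automorphism of the finite tree extends). -/
def finAut (X : Type*) (d : ℕ) : Subgroup (Pat X d) := (restr X d).range

/-- The `n`-th level stabilizer in `Aut X*`: automorphisms fixing all words of length `≤ n`. -/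
def levelStab (X : Type*) (n : ℕ) : Subgroup ↥(treeAut X) := (restr X n).ker

/-- The self-similar group of finite type `G_P` given by a pattern group `P ≤ Aut X^[d]`:
all tree automorphisms all of whose sections restrict to elements of `P` on `X^[d]`. -/
def GP (X : Type*) (d : ℕ) (P : Subgroup (Pat X d)) : Subgroup ↥(treeAut X) where
  carrier := {g | ∀ v : List X, restr X d (sect g v) ∈ P}
  one_mem' := fun v => by rw [sect_one, map_one]; exact P.one_mem
  mul_mem' := fun {a b} ha hb v => by
    rw [sect_mul, map_mul]; exact P.mul_mem (ha _) (hb v)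
  inv_mem' := fun {a} ha v => by
    rw [sect_inv, map_inv]; exact P.inv_mem (ha _)

theorem mem_GP {X : Type*} {d : ℕ} {P : Subgroup (Pat X d)} (g : ↥(treeAut X)) :
    g ∈ GP X d P ↔ ∀ v : List X, restr X d (sect g v) ∈ P := Iff.rfl

/-- The edge relation `a →^x b` of the pattern graph `Γ_P`: the section of the pattern `a`
at the letter `x` agrees with the pattern `b` on `X^[d-1]`. -/
def patEdge (X : Type*) (d : ℕ) (a : Pat X d) (x : X) (b : Pat X d) : Prop :=
  ∀ (w : List X) (hw : w.length ≤ d - 1) (hw' : (x :: w).length ≤ d),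
    ((a ⟨x :: w, hw'⟩ : {l : List X // l.length ≤ d}) : List X).tail
      = ((b ⟨w, le_trans hw (Nat.sub_le d 1)⟩ : {l : List X // l.length ≤ d}) : List X)

/-- The subgroup of `Sym(X^[d])` of elements fixing all words of length at most `k`. -/
def patLevelStab (X : Type*) (d k : ℕ) : Subgroup (Pat X d) where
  carrier := {a | ∀ (w : List X) (hw : w.length ≤ d), w.length ≤ k → a ⟨w, hw⟩ = ⟨w, hw⟩}
  one_mem' := fun _ _ _ => rfl
  mul_mem' := fun {a b} ha hb w hw hk => by
    have h1 := hb w hw hk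
    have h2 := ha w hw hk
    show a (b ⟨w, hw⟩) = ⟨w, hw⟩
    rw [h1, h2]
  inv_mem' := fun {a} ha w hw hk => by
    have h1 := ha w hw hk
    have h2 : a⁻¹ (a ⟨w, hw⟩) = ⟨w, hw⟩ := by simp
    rwa [h1] at h2

/-- Level-transitivity: the group acts transitively on every level `X^n` of the tree. -/
def LevelTrans {X : Type*} (G : Subgroup ↥(treeAut X)) : Prop :=
  ∀ u v : List X, u.length = v.length → ∃ g ∈ G, (g : Equiv.Perm (List X)) u = v

/-- Topological finite generation of a closed subgroup `G ≤ Aut X*`, expressed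
concretely: some finite subset of `G` generates a subgroup which is dense in `G`
for the profinite (congruence) topology of `Aut X*`. -/
def TopFG {X : Type*} (G : Subgroup ↥(treeAut X)) : Prop :=
  ∃ S : Finset ↥(treeAut X), (S : Set ↥(treeAut X)) ⊆ (G : Set ↥(treeAut X)) ∧
    ∀ g ∈ G, ∀ n : ℕ, ∃ h ∈ Subgroup.closure (S : Set ↥(treeAut X)),
      ∀ w : List X, w.length ≤ n →
        (h : Equiv.Perm (List X)) w = (g : Equiv.Perm (List X)) w

/-!
Write `G = G_P`, `St(n)` for the `n`-th level stabilizer and `k = n + 1 - d`. Then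
`|G|_{X^[n]}| = [G : G ∩ St(n)]`, so the ratio `|G|_{X^[n+1]}| / |G|_{X^[n]}|` is the index
`[G ∩ St(n) : G ∩ St(n+1)]`.
An element of `G ∩ St(n)` is determined modulo `St(n+1)` by the patterns of its sections at the
`|X|^k` vertices of level `k`, each of which lies in `St_P(d-1)`; conversely, by minimality every
element of `St_P(d-1)` is the pattern of some element of `G`, and grafting arbitrary such elements
below the vertices of level `k` stays in `G`. Hence each step multiplies the order by `m^(|X|^k)`.
-/

namespace TreeAut

variable {X : Type*}

section LevelStab

theorem mem_levelStab_iff {n : ℕ} {g : ↥(treeAut X)} :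
    g ∈ levelStab X n ↔ ∀ w : List X, w.length ≤ n → (g : Equiv.Perm (List X)) w = w := by
  rw [levelStab, MonoidHom.mem_ker, Equiv.ext_iff]
  exact ⟨fun h w hw => congrArg Subtype.val (h ⟨w, hw⟩), fun h w => Subtype.ext (h w.1 w.2)⟩

theorem levelStab_anti {m n : ℕ} (hmn : m ≤ n) : levelStab X n ≤ levelStab X m :=
  fun _ hg => mem_levelStab_iff.2 fun w hw => mem_levelStab_iff.1 hg w (hw.trans hmn)

theorem sect_mem_levelStab {n : ℕ} {g : ↥(treeAut X)} {v : List X}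
    (hg : g ∈ levelStab X (v.length + n)) : sect g v ∈ levelStab X n := by
  refine mem_levelStab_iff.2 fun w hw => ?_
  rw [sect_apply, sectFun, mem_levelStab_iff.1 hg (v ++ w) (by simpa using hw), List.drop_left]

theorem mem_levelStab_add_of_sect {k n : ℕ} {g : ↥(treeAut X)} (hg : g ∈ levelStab X k)
    (hsect : ∀ v : List X, v.length = k → sect g v ∈ levelStab X n) :
    g ∈ levelStab X (k + n) := by
  refine mem_levelStab_iff.2 fun w hw => ?_
  rcases le_or_gt w.length k with hwk | hkw
  · exact mem_levelStab_iff.1 hg w hwk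
  · have htake : (w.take k).length = k := List.length_take_of_le hkw.le
    rw [← List.take_append_drop k w, treeAut.apply_append g.2,
      mem_levelStab_iff.1 hg _ htake.le, ← sect_apply,
      mem_levelStab_iff.1 (hsect _ htake) _ (by simp; omega)]

theorem restr_mem_patLevelStab_iff {c d : ℕ} (hcd : c ≤ d) {g : ↥(treeAut X)} :
    restr X d g ∈ patLevelStab X d c ↔ g ∈ levelStab X c := by
  rw [mem_levelStab_iff]
  exact ⟨fun h w hw => congrArg Subtype.val (h w (hw.trans hcd) hw),
    fun h w _ hw => Subtype.ext (h w hw)⟩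

end LevelStab

section Graft

private theorem take_drop_take_append {k : ℕ} {w b : List X}
    (hb : b.length = (w.drop k).length) :
    (w.take k ++ b).take k = w.take k ∧ (w.take k ++ b).drop k = b := by
  rcases le_or_gt k w.length with hkw | hwk
  · have htake : (w.take k).length = k := List.length_take_of_le hkw
    exact ⟨List.take_left' htake, List.drop_left' htake⟩
  · have hb' : b = [] := List.eq_nil_of_length_eq_zero (by simp [hb]; omega)
    subst hb'
    simp

def graftFun (k : ℕ) (gf : List X → ↥(treeAut X)) (w : List X) : List X :=
  w.take k ++ (gf (w.take k) : Equiv.Perm (List X)) (w.drop k)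

theorem take_graftFun (k : ℕ) (gf : List X → ↥(treeAut X)) (w : List X) :
    (graftFun k gf w).take k = w.take k :=
  (take_drop_take_append (treeAut.length_apply (gf _).2 _)).1

theorem drop_graftFun (k : ℕ) (gf : List X → ↥(treeAut X)) (w : List X) :
    (graftFun k gf w).drop k = (gf (w.take k) : Equiv.Perm (List X)) (w.drop k) :=
  (take_drop_take_append (treeAut.length_apply (gf _).2 _)).2

theorem graftFun_inv_graftFun (k : ℕ) (gf : List X → ↥(treeAut X)) (w : List X) :
    graftFun k (fun v => (gf v)⁻¹) (graftFun k gf w) = w := by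
  rw [graftFun, take_graftFun, drop_graftFun]
  simp

def graft (k : ℕ) (gf : List X → ↥(treeAut X)) : ↥(treeAut X) where
  val :=
    { toFun := graftFun k gf
      invFun := graftFun k (fun v => (gf v)⁻¹)
      left_inv := graftFun_inv_graftFun k gf
      right_inv w := by simpa using graftFun_inv_graftFun k (fun v => (gf v)⁻¹) w }
  property := by
    refine ⟨by simp [graftFun, (gf []).2.1], fun v x => ?_⟩
    show ∃ y, graftFun k gf (v ++ [x]) = graftFun k gf v ++ [y]
    rcases lt_or_ge v.length k with hvk | hkv
    · have hle : (v ++ [x]).length ≤ k := by simp; omega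
      refine ⟨x, ?_⟩
      simp [graftFun, List.take_of_length_le hle, List.drop_eq_nil_of_le hle,
        List.take_of_length_le hvk.le, List.drop_eq_nil_of_le hvk.le, (gf _).2.1]
    · obtain ⟨y, hy⟩ := (gf (v.take k)).2.2 (v.drop k) x
      refine ⟨y, ?_⟩
      rw [graftFun, graftFun, List.take_append_of_le_length hkv,
        List.drop_append_of_le_length hkv, hy, List.append_assoc]

theorem graft_apply (k : ℕ) (gf : List X → ↥(treeAut X)) (w : List X) :
    (graft k gf : Equiv.Perm (List X)) w = graftFun k gf w := rfl

theorem graft_mem_levelStab (k : ℕ) (gf : List X → ↥(treeAut X)) :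
    graft k gf ∈ levelStab X k :=
  mem_levelStab_iff.2 fun w hw => by
    rw [graft_apply, graftFun, List.take_of_length_le hw, List.drop_eq_nil_of_le hw,
      (gf w).2.1, List.append_nil]

theorem sect_graft {k : ℕ} (gf : List X → ↥(treeAut X)) {v : List X} (hkv : k ≤ v.length) :
    sect (graft k gf) v = sect (gf (v.take k)) (v.drop k) := by
  refine Subtype.ext (Equiv.ext fun u => ?_)
  have hlen : v.length = (v.take k).length + (v.drop k).length := by simp; omega
  rw [sect_apply, sect_apply, sectFun, sectFun, graft_apply, graftFun,
    List.take_append_of_le_length hkv, List.drop_append_of_le_length hkv, hlen,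
    ← List.drop_drop, List.drop_left]

theorem sect_graft_of_length_eq {k : ℕ} (gf : List X → ↥(treeAut X)) {v : List X}
    (hv : v.length = k) : sect (graft k gf) v = gf v := by
  rw [sect_graft gf hv.ge, List.take_of_length_le hv.le, List.drop_eq_nil_of_le hv.le, sect_nil]

end Graft

section SectionPatterns

variable {c : ℕ} (P : Subgroup (Pat X (c + 1)))

def sectionPatterns (k : ℕ) :
    ↥(GP X (c + 1) P ⊓ levelStab X (k + c)) →*
      (List.Vector X k → ↥(P ⊓ patLevelStab X (c + 1) c)) where
  toFun g v :=
    ⟨restr X (c + 1) (sect (g : ↥(treeAut X)) v.1), (Subgroup.mem_inf.1 g.2).1 v.1,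
      (restr_mem_patLevelStab_iff (c.le_add_right 1)).2
        (sect_mem_levelStab (by rw [v.2]; exact (Subgroup.mem_inf.1 g.2).2))⟩
  map_one' := funext fun v => Subtype.ext (by simp [sect_one])
  map_mul' g h := funext fun v => Subtype.ext <| by
    show restr X (c + 1) (sect ((g : ↥(treeAut X)) * h) v.1)
      = restr X (c + 1) (sect g v.1) * restr X (c + 1) (sect h v.1)
    rw [sect_mul, mem_levelStab_iff.1 (Subgroup.mem_inf.1 h.2).2 v.1 (by rw [v.2]; omega),
      map_mul]

theorem sectionPatterns_ker (k : ℕ) :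
    (sectionPatterns P k).ker
      = (levelStab X (k + c + 1)).subgroupOf (GP X (c + 1) P ⊓ levelStab X (k + c)) := by
  ext g
  have hg := (Subgroup.mem_inf.1 g.2).2
  rw [MonoidHom.mem_ker, Subgroup.mem_subgroupOf, funext_iff]
  simp only [Pi.one_apply, Subtype.ext_iff, OneMemClass.coe_one]
  constructor
  · intro h
    show (g : ↥(treeAut X)) ∈ levelStab X (k + (c + 1))
    refine mem_levelStab_add_of_sect (levelStab_anti (k.le_add_right c) hg) fun v hv => ?_
    exact (restr X (c + 1)).mem_ker.1 (h ⟨v, hv⟩)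
  · intro h v
    exact (restr X (c + 1)).mem_ker.2 (sect_mem_levelStab (by rw [v.2]; exact h))

variable {P}

theorem sectionPatterns_surjective (hmin : P = Subgroup.map (restr X (c + 1)) (GP X (c + 1) P))
    (k : ℕ) : Function.Surjective (sectionPatterns P k) := by
  intro f
  have hlift : ∀ v : List.Vector X k, ∃ g ∈ GP X (c + 1) P, restr X (c + 1) g = f v :=
    fun v => Subgroup.mem_map.1 (hmin.le (Subgroup.mem_inf.1 (f v).2).1)
  choose g hgG hg using hlift
  let gf : List X → ↥(treeAut X) := fun v => if hv : v.length = k then g ⟨v, hv⟩ else 1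
  have hgf : ∀ v : List.Vector X k, gf v.1 = g v := fun v => dif_pos v.2
  have hgf_GP : ∀ v, gf v ∈ GP X (c + 1) P := by
    intro v
    by_cases hv : v.length = k
    · simp only [gf, hv, dite_true]
      exact hgG _
    · simp only [gf, hv, dite_false]
      exact one_mem _
  have hg_stab : ∀ v, g v ∈ levelStab X c := fun v =>
    (restr_mem_patLevelStab_iff (c.le_add_right 1)).1
      ((hg v).symm ▸ (Subgroup.mem_inf.1 (f v).2).2)
  have hgraft_stab : graft k gf ∈ levelStab X (k + c) := by
    refine mem_levelStab_add_of_sect (graft_mem_levelStab k gf) fun v hv => ?_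
    rw [sect_graft_of_length_eq gf hv, hgf ⟨v, hv⟩]
    exact hg_stab _
  have hgraft_GP : graft k gf ∈ GP X (c + 1) P := by
    intro v
    rcases lt_or_ge v.length k with hvk | hkv
    · have hsect : sect (graft k gf) v ∈ levelStab X (c + 1) :=
        sect_mem_levelStab (levelStab_anti (by omega) hgraft_stab)
      rw [(restr X (c + 1)).mem_ker.1 hsect]
      exact P.one_mem
    · rw [sect_graft gf hkv]
      exact hgf_GP _ _
  refine ⟨⟨graft k gf, hgraft_GP, hgraft_stab⟩, funext fun v => Subtype.ext ?_⟩
  show restr X (c + 1) (sect (graft k gf) v.1) = f v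
  rw [sect_graft_of_length_eq gf v.2, hgf, hg]

theorem relIndex_levelStab_succ [Fintype X]
    (hmin : P = Subgroup.map (restr X (c + 1)) (GP X (c + 1) P)) (k : ℕ) :
    (levelStab X (k + c + 1)).relIndex (GP X (c + 1) P ⊓ levelStab X (k + c))
      = Nat.card ↥(P ⊓ patLevelStab X (c + 1) c) ^ Fintype.card X ^ k := by
  rw [Subgroup.relIndex, ← sectionPatterns_ker, Subgroup.index_ker,
    MonoidHom.range_eq_top.2 (sectionPatterns_surjective hmin k), Subgroup.card_top,
    Nat.card_fun, Nat.card_eq_fintype_card (α := List.Vector X k), card_vector]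

end SectionPatterns

theorem relIndex_levelStab (n : ℕ) (H : Subgroup ↥(treeAut X)) :
    (levelStab X n).relIndex H = Nat.card ↥(Subgroup.map (restr X n) H) :=
  Subgroup.relIndex_ker H (restr X n)

variable [Fintype X] {c : ℕ} {P : Subgroup (Pat X (c + 1))}

theorem card_map_restr_succ (hmin : P = Subgroup.map (restr X (c + 1)) (GP X (c + 1) P))
    (k : ℕ) :
    Nat.card ↥(Subgroup.map (restr X (k + c + 1)) (GP X (c + 1) P))
      = Nat.card ↥(Subgroup.map (restr X (k + c)) (GP X (c + 1) P))
          * Nat.card ↥(P ⊓ patLevelStab X (c + 1) c) ^ Fintype.card X ^ k := by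
  rw [← relIndex_levelStab, ← relIndex_levelStab, ← relIndex_levelStab_succ hmin, mul_comm,
    inf_comm (GP X (c + 1) P), Subgroup.relIndex_inf_mul_relIndex,
    inf_eq_left.2 (levelStab_anti (k + c).le_succ)]

theorem card_map_restr_add (hmin : P = Subgroup.map (restr X (c + 1)) (GP X (c + 1) P))
    (j : ℕ) :
    Nat.card ↥(Subgroup.map (restr X (c + 1 + j)) (GP X (c + 1) P))
      = Nat.card ↥P * Nat.card ↥(P ⊓ patLevelStab X (c + 1) c)
          ^ (∑ i ∈ Finset.Icc 1 j, Fintype.card X ^ i) := by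
  induction j with
  | zero => simp [← hmin]
  | succ j ih =>
    rw [show c + 1 + (j + 1) = j + 1 + c + 1 by omega, card_map_restr_succ hmin,
      show j + 1 + c = c + 1 + j by omega, ih, Finset.sum_Icc_succ_top (by omega)]
    ring

end TreeAut

theorem statement9_general {X : Type*} [Fintype X] (d : ℕ) (hd : 1 ≤ d)
    (P : Subgroup (Pat X d))
    (hmin : P = Subgroup.map (restr X d) (GP X d P)) (n : ℕ) (hn : d < n) :
    Nat.card ↥(Subgroup.map (restr X n) (GP X d P))
      = Nat.card ↥P * (Nat.card ↥(P ⊓ patLevelStab X d (d - 1)))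
          ^ (∑ i ∈ Finset.Icc 1 (n - d), (Fintype.card X) ^ i) := by
  obtain ⟨c, rfl⟩ : ∃ c, d = c + 1 := ⟨d - 1, by omega⟩
  obtain ⟨j, rfl⟩ : ∃ j, n = c + 1 + j := ⟨n - (c + 1), by omega⟩
  rw [Nat.add_sub_cancel, Nat.add_sub_cancel_left]
  exact TreeAut.card_map_restr_add hmin j

/-- for a minimal pattern group `P` of depth `d` with `m = |St_P(d-1)|` and
`n > d`, the restriction of `G_P` to `X^[n]` has order `|P| · m^(|X| + |X|² + ⋯ + |X|^(n-d))`. -/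
theorem statement9 {X : Type*} [Fintype X] [Nontrivial X] (d : ℕ) (hd : 1 ≤ d)
    (P : Subgroup (Pat X d)) (hP : P ≤ finAut X d)
    (hmin : P = Subgroup.map (restr X d) (GP X d P)) (n : ℕ) (hn : d < n) :
    Nat.card ↥(Subgroup.map (restr X n) (GP X d P))
      = Nat.card ↥P * (Nat.card ↥(P ⊓ patLevelStab X d (d - 1)))
          ^ (∑ i ∈ Finset.Icc 1 (n - d), (Fintype.card X) ^ i) :=
  statement9_general d hd P hmin n hn
end

section
/- If P is an abelian pattern group of depth d, then the self-similar group of finite type G_P is topologically finitely generated if and only if it is finite. -/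
/-!
For abelian `P`, multiplying the patterns of `g ∈ G_P` at all vertices of level `m` gives a
homomorphism `φ_m : G_P → P`, and `φ_m g` only depends on the action of `g` on the levels
`≤ m + d`. If `G_P` is topologically generated by `k` elements, every map `(φ_0, …, φ_N)`
therefore takes at most `|P| ^ k` values on `G_P`: its image is a `k`-generated abelian group
of exponent dividing `|P|`. If `G_P` is infinite, it contains an element `s` fixing the levels
`< d` with nontrivial pattern `p`. Grafting `s` at a vertex of level `n` gives `t_n ∈ G_P` with
`φ_n t_n = p` and `φ_m t_n = 1` for `m < n`, so `(φ_0, …, φ_N)` takes `N + 1` distinct values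
on `t_0, …, t_N`; take `N = |P| ^ k`.
-/

open List

open scoped IsMulCommutative

theorem Subgroup.closure_range_subset_range_prod_pow {A ι : Type*} [CommGroup A] [Fintype ι]
    (f : ι → A) {e : ℕ} (he : 0 < e) (hexp : ∀ i, f i ^ e = 1) :
    (Subgroup.closure (Set.range f) : Set A) ⊆
      Set.range fun a : ι → Fin e => ∏ i, f i ^ (a i : ℕ) := by
  intro x hx
  obtain ⟨a, rfl⟩ := Subgroup.mem_closure_range_iff_of_fintype.mp hx
  have hmod : ∀ i, 0 ≤ a i % e ∧ a i % e < e := fun i =>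
    ⟨Int.emod_nonneg _ (by omega), Int.emod_lt_of_pos _ (by omega)⟩
  refine ⟨fun i => ⟨(a i % e).toNat, by have := hmod i; omega⟩,
    Finset.prod_congr rfl fun i _ => ?_⟩
  rw [zpow_eq_zpow_emod (a i) (by exact_mod_cast hexp i : f i ^ (e : ℤ) = 1),
    ← Int.toNat_of_nonneg (hmod i).1, zpow_natCast]

section TreeAut

variable {X : Type*}

instance finite_subtype_length_le [Finite X] (n : ℕ) : Finite {l : List X // l.length ≤ n} :=
  (List.finite_length_le X n).to_subtype

theorem restr_apply (d : ℕ) (g : treeAut X) (u : List X) (hu : u.length ≤ d) :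
    (restr X d g ⟨u, hu⟩ : List X) = (g : Equiv.Perm (List X)) u := rfl

theorem restr_eq_one_iff {d : ℕ} {g : treeAut X} :
    restr X d g = 1 ↔ ∀ u : List X, u.length ≤ d → (g : Equiv.Perm (List X)) u = u :=
  ⟨fun h u hu => congrArg Subtype.val (Equiv.ext_iff.mp h ⟨u, hu⟩),
    fun h => Equiv.ext fun u => Subtype.ext (h u.1 u.2)⟩

theorem restr_sect_congr {d : ℕ} {g h : treeAut X} {v : List X}
    (H : ∀ u : List X, u.length ≤ d →
      (g : Equiv.Perm (List X)) (v ++ u) = (h : Equiv.Perm (List X)) (v ++ u)) :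
    restr X d (sect g v) = restr X d (sect h v) :=
  Equiv.ext fun u => Subtype.ext <| by
    rw [restr_apply, restr_apply, sect_apply, sect_apply, sectFun, sectFun, H u.1 u.2]

theorem exists_apply_ne_of_ne_one {g : treeAut X} (hg : g ≠ 1) :
    ∃ w : List X, (g : Equiv.Perm (List X)) w ≠ w ∧
      ∀ z : List X, z.length < w.length → (g : Equiv.Perm (List X)) z = z := by
  have hmoved : {w : List X | (g : Equiv.Perm (List X)) w ≠ w}.Nonempty := by
    by_contra h
    refine hg (Subtype.ext (Equiv.ext fun w => ?_))
    by_contra hw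
    exact h ⟨w, hw⟩
  obtain ⟨w, hw, hmin⟩ := (measure List.length).wf.has_min _ hmoved
  exact ⟨w, hw, fun z hz => by_contra fun hgz => hmin z hgz hz⟩

theorem exists_ne_one_fix_of_infinite [Finite X] (G : Subgroup (treeAut X)) [Infinite G]
    (n : ℕ) :
    ∃ g ∈ G, g ≠ 1 ∧ ∀ z : List X, z.length ≤ n → (g : Equiv.Perm (List X)) z = z := by
  obtain ⟨g₁, g₂, hne, heq⟩ :=
    Finite.exists_ne_map_eq_of_infinite fun g : G => restr X n g
  refine ⟨(g₁ : treeAut X) * (g₂ : treeAut X)⁻¹, G.mul_mem g₁.2 (G.inv_mem g₂.2), ?_,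
    restr_eq_one_iff.mp ?_⟩
  · exact fun h => hne (Subtype.ext (mul_inv_eq_one.mp h))
  · rw [map_mul, map_inv, heq, mul_inv_cancel]

end TreeAut

section Graft

variable {X : Type*}

open Classical in
noncomputable def graftPerm (c : List X) (s : Equiv.Perm (List X)) : Equiv.Perm (List X) where
  toFun w := if c <+: w then c ++ s (w.drop c.length) else w
  invFun w := if c <+: w then c ++ s⁻¹ (w.drop c.length) else w
  left_inv w := by
    by_cases h : c <+: w
    · obtain ⟨t, rfl⟩ := h
      simp
    · simp [h]
  right_inv w := by
    by_cases h : c <+: w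
    · obtain ⟨t, rfl⟩ := h
      simp
    · simp [h]

theorem graftPerm_apply_append (c t : List X) (s : Equiv.Perm (List X)) :
    graftPerm c s (c ++ t) = c ++ s t := by
  simp [graftPerm]

theorem graftPerm_apply_of_not_prefix {c w : List X} (s : Equiv.Perm (List X))
    (h : ¬ c <+: w) : graftPerm c s w = w := by
  simp [graftPerm, h]

theorem graftPerm_mem_treeAut (c : List X) {s : Equiv.Perm (List X)} (hs : s ∈ treeAut X) :
    graftPerm c s ∈ treeAut X := by
  refine ⟨?_, fun v x => ?_⟩
  · by_cases h : c <+: []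
    · obtain rfl := List.prefix_nil.mp h
      simpa [hs.1] using graftPerm_apply_append [] [] s
    · exact graftPerm_apply_of_not_prefix s h
  by_cases hcv : c <+: v
  · obtain ⟨t, rfl⟩ := hcv
    obtain ⟨y, hy⟩ := hs.2 t x
    refine ⟨y, ?_⟩
    rw [List.append_assoc, graftPerm_apply_append, graftPerm_apply_append, hy, List.append_assoc]
  refine ⟨x, ?_⟩
  rw [graftPerm_apply_of_not_prefix s hcv]
  by_cases hcvx : c = v ++ [x]
  · subst hcvx
    simpa [hs.1] using graftPerm_apply_append (v ++ [x]) [] s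
  · exact graftPerm_apply_of_not_prefix s (by rw [List.prefix_concat_iff]; tauto)

noncomputable def graft (c : List X) (s : treeAut X) : treeAut X :=
  ⟨graftPerm c s, graftPerm_mem_treeAut c s.2⟩

theorem sect_graft_self (c : List X) (s : treeAut X) : sect (graft c s) c = s :=
  Subtype.ext <| Equiv.ext fun w => by
    rw [sect_apply, sectFun]
    exact (congrArg (List.drop c.length) (graftPerm_apply_append c w s)).trans
      (List.drop_left ..)

theorem graft_apply_append_of_not_prefix {d : ℕ} {s : treeAut X}
    (hs : ∀ z : List X, z.length < d → (s : Equiv.Perm (List X)) z = z)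
    {c w u : List X} (hcw : ¬ c <+: w) (hu : u.length ≤ d) :
    (graft c s : Equiv.Perm (List X)) (w ++ u) = w ++ u := by
  by_cases hc : c <+: w ++ u
  · obtain ⟨t, ht⟩ := hc
    have hwc : w.length < c.length := by
      by_contra! hle
      exact hcw (List.prefix_of_prefix_length_le ⟨t, ht⟩ (List.prefix_append w u) hle)
    have hlen := congrArg List.length ht
    simp only [List.length_append] at hlen
    show graftPerm c s (w ++ u) = w ++ u
    rw [← ht, graftPerm_apply_append, hs t (by omega)]
  · exact graftPerm_apply_of_not_prefix _ hc

theorem restr_sect_graft_of_not_prefix {d : ℕ} {s : treeAut X}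
    (hs : ∀ z : List X, z.length < d → (s : Equiv.Perm (List X)) z = z)
    {c w : List X} (hcw : ¬ c <+: w) : restr X d (sect (graft c s) w) = 1 :=
  restr_eq_one_iff.mpr fun u hu => by
    rw [sect_apply, sectFun, graft_apply_append_of_not_prefix hs hcw hu, List.drop_left]

end Graft

section GP

variable {X : Type*} {d : ℕ} {P : Subgroup (Pat X d)}

theorem sect_mem_GP {g : treeAut X} (hg : g ∈ GP X d P) (v : List X) : sect g v ∈ GP X d P :=
  fun w => sect_append g v w ▸ hg (v ++ w)

theorem graft_mem_GP {s : treeAut X} (hs : s ∈ GP X d P)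
    (hfix : ∀ z : List X, z.length < d → (s : Equiv.Perm (List X)) z = z) (c : List X) :
    graft c s ∈ GP X d P := by
  intro w
  by_cases hcw : c <+: w
  · obtain ⟨w', rfl⟩ := hcw
    rw [sect_append, sect_graft_self]
    exact hs w'
  · rw [restr_sect_graft_of_not_prefix hfix hcw]
    exact P.one_mem

theorem exists_mem_GP_fix_restr_ne_one [Finite X] (hd : 1 ≤ d) [Infinite (GP X d P)] :
    ∃ s ∈ GP X d P, (∀ z : List X, z.length < d → (s : Equiv.Perm (List X)) z = z) ∧
      restr X d s ≠ 1 := by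
  obtain ⟨g, hgG, hg1, hgfix⟩ := exists_ne_one_fix_of_infinite (GP X d P) (d - 1)
  -- a shortest moved word `w = v ++ u` with `|u| = d`; `g` fixes `v` as `|v| < |w|`
  obtain ⟨w, hgw, hmin⟩ := exists_apply_ne_of_ne_one hg1
  have hdw : d ≤ w.length := by
    by_contra! h
    exact hgw (hgfix w (by omega))
  set v := w.take (w.length - d)
  set u := w.drop (w.length - d)
  have hv : v.length = w.length - d := by simp [v]
  have hu : u.length = d := by simp [u]; omega
  have hgv : (g : Equiv.Perm (List X)) v = v := hmin v (by omega)
  refine ⟨sect g v, sect_mem_GP hgG v, fun z hz => ?_, fun h => hgw ?_⟩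
  · rw [sect_apply, sectFun, hmin (v ++ z) (by simp; omega), List.drop_left]
  · have hsu := restr_eq_one_iff.mp h u hu.le
    rw [sect_apply] at hsu
    rw [← List.take_append_drop (w.length - d) w, treeAut.apply_append g.2, hgv, hsu]

def patternAt (g : GP X d P) (v : List X) : P := ⟨restr X d (sect g v), g.2 v⟩

theorem patternAt_mul (g h : GP X d P) (v : List X) :
    patternAt (g * h) v = patternAt g ((h : Equiv.Perm (List X)) v) * patternAt h v :=
  Subtype.ext <| by simp only [patternAt, Subgroup.coe_mul, sect_mul, map_mul]

end GP

section Density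

variable {X : Type*} {G : Subgroup (treeAut X)}

theorem TopFG.of_finite [Finite G] : TopFG G :=
  ⟨(G : Set (treeAut X)).toFinite.toFinset, by simp, fun g hg _ =>
    ⟨g, Subgroup.subset_closure (by simpa using hg), fun _ _ => rfl⟩⟩

theorem card_range_le_of_dense {A : Type*} [CommGroup A] {S : Finset (treeAut X)}
    (hSG : (S : Set (treeAut X)) ⊆ G)
    (hdense : ∀ g ∈ G, ∀ n : ℕ, ∃ h ∈ Subgroup.closure (S : Set (treeAut X)),
      ∀ w : List X, w.length ≤ n → (h : Equiv.Perm (List X)) w = (g : Equiv.Perm (List X)) w)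
    (φ : G →* A) {e L : ℕ} (he : 0 < e) (hexp : ∀ a : A, a ^ e = 1)
    (hφ : ∀ g h : G, (∀ w : List X, w.length ≤ L →
      (g : Equiv.Perm (List X)) w = (h : Equiv.Perm (List X)) w) → φ g = φ h) :
    Nat.card φ.range ≤ e ^ S.card := by
  have hSG' : Subgroup.closure (S : Set (treeAut X)) ≤ G := (Subgroup.closure_le G).mpr hSG
  let q : S → A := fun s => φ ⟨s, hSG s.2⟩
  have hclosure : ∀ h (hh : h ∈ Subgroup.closure (S : Set (treeAut X))),
      φ ⟨h, hSG' hh⟩ ∈ Subgroup.closure (Set.range q) := by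
    intro h hh
    induction hh using Subgroup.closure_induction with
    | mem s hs => exact Subgroup.subset_closure ⟨⟨s, hs⟩, rfl⟩
    | one => exact (map_one φ).symm ▸ Subgroup.one_mem _
    | mul x y hx' hy' hx hy =>
      exact (map_mul φ ⟨x, hSG' hx'⟩ ⟨y, hSG' hy'⟩).symm ▸ Subgroup.mul_mem _ hx hy
    | inv x hx' hx => exact (map_inv φ ⟨x, hSG' hx'⟩).symm ▸ Subgroup.inv_mem _ hx
  have hrange : (φ.range : Set A) ⊆ Subgroup.closure (Set.range q) := by
    rintro _ ⟨g, rfl⟩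
    obtain ⟨h, hh, hagree⟩ := hdense g g.2 L
    rw [hφ g ⟨h, hSG' hh⟩ fun w hw => (hagree w hw).symm]
    exact hclosure h hh
  calc Nat.card φ.range
      ≤ Nat.card (Set.range fun a : S → Fin e => ∏ s, q s ^ (a s : ℕ)) :=
        Nat.card_mono (Set.finite_range _) <| hrange.trans <|
          Subgroup.closure_range_subset_range_prod_pow q he fun s => hexp _
    _ ≤ Nat.card (S → Fin e) := Finite.card_range_le _
    _ = e ^ S.card := by simp [Nat.card_fun]

end Density

section LevelPatternProd

variable {X : Type*} [Fintype X] {d : ℕ} {P : Subgroup (Pat X d)} [IsMulCommutative P]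

noncomputable def levelPatternProd (m : ℕ) : GP X d P →* P :=
  MonoidHom.mk' (fun g => ∏ w : List.Vector X m, patternAt g w.1) fun g h => by
    simp only [patternAt_mul, Finset.prod_mul_distrib]
    congr 1
    exact Equiv.prod_comp (ι := List.Vector X m) (κ := List.Vector X m)
      ((h : Equiv.Perm (List X)).subtypePerm fun w => by rw [treeAut.length_apply h.1.2])
      fun w => patternAt g w.1

theorem levelPatternProd_apply (m : ℕ) (g : GP X d P) :
    levelPatternProd m g = ∏ w : List.Vector X m, patternAt g w.1 := rfl

theorem levelPatternProd_congr (m : ℕ) {g h : GP X d P}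
    (H : ∀ w : List X, w.length ≤ m + d →
      (g : Equiv.Perm (List X)) w = (h : Equiv.Perm (List X)) w) :
    levelPatternProd m g = levelPatternProd m h :=
  Finset.prod_congr rfl fun w _ => Subtype.ext <| restr_sect_congr fun u hu =>
    H _ (by simp [w.2]; omega)

noncomputable def levelPatternProds (N : ℕ) : GP X d P →* (Fin (N + 1) → P) :=
  MonoidHom.pi fun i => levelPatternProd i

section Grafted

variable {s : treeAut X} (hs : s ∈ GP X d P)
  (hfix : ∀ z : List X, z.length < d → (s : Equiv.Perm (List X)) z = z)
include hs hfix

theorem levelPatternProd_graft_of_lt {c : List X} {m : ℕ} (hm : m < c.length) :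
    levelPatternProd m ⟨graft c s, graft_mem_GP hs hfix c⟩ = 1 :=
  Finset.prod_eq_one fun w _ => Subtype.ext <|
    restr_sect_graft_of_not_prefix hfix fun hcw => by
      have := hcw.length_le
      simp only [w.2] at this
      omega

theorem levelPatternProd_graft_length (c : List X) :
    levelPatternProd c.length ⟨graft c s, graft_mem_GP hs hfix c⟩ =
      ⟨restr X d s, sect_nil s ▸ hs []⟩ := by
  rw [levelPatternProd_apply, Fintype.prod_eq_single ⟨c, rfl⟩]
  · exact Subtype.ext (congrArg (restr X d) (sect_graft_self c s))
  · intro w hw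
    refine Subtype.ext (restr_sect_graft_of_not_prefix hfix fun hcw => hw ?_)
    exact Subtype.ext (hcw.eq_of_length w.2.symm).symm

theorem lt_card_range_levelPatternProds (hs1 : restr X d s ≠ 1) (N : ℕ) :
    N < Nat.card (levelPatternProds (P := P) N).range := by
  obtain ⟨x⟩ : Nonempty X := by
    by_contra hX
    have : IsEmpty X := not_nonempty_iff.mp hX
    exact hs1 (restr_eq_one_iff.mpr fun _ _ => Subsingleton.elim _ _)
  set Ψ := levelPatternProds (P := P) N
  let t : ℕ → GP X d P := fun n => ⟨graft (List.replicate n x) s, graft_mem_GP hs hfix _⟩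
  have hgraft : ∀ a b : Fin (N + 1), a < b → Ψ (t a) ≠ Ψ (t b) := by
    intro a b hab heq
    have hta := levelPatternProd_graft_length hs hfix (List.replicate a x)
    have htb := levelPatternProd_graft_of_lt hs hfix (c := List.replicate b x) (m := a)
      (by simpa using hab)
    rw [List.length_replicate] at hta
    exact hs1 (congrArg Subtype.val (hta.symm.trans ((congrFun heq a).trans htb)))
  have hinj : Function.Injective fun n : Fin (N + 1) => (⟨Ψ (t n), t n, rfl⟩ : Ψ.range) := by
    intro a b hab
    by_contra hne
    rcases Fin.lt_or_lt_of_ne hne with h | h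
    · exact hgraft a b h (congrArg Subtype.val hab)
    · exact hgraft b a h (congrArg Subtype.val hab).symm
  simpa using Nat.card_le_card_of_injective _ hinj

end Grafted

end LevelPatternProd

theorem statement18_general {X : Type*} [Fintype X] (d : ℕ) (hd : 1 ≤ d)
    (P : Subgroup (Pat X d))
    (hab : ∀ a ∈ P, ∀ b ∈ P, a * b = b * a) :
    TopFG (GP X d P) ↔ Finite ↥(GP X d P) := by
  refine ⟨fun ⟨S, hSG, hdense⟩ => ?_, fun _ => TopFG.of_finite⟩
  by_contra hfin
  have : Infinite (GP X d P) := not_finite_iff_infinite.mp hfin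
  have : IsMulCommutative P := .of_setLike_mul_comm hab
  obtain ⟨s, hs, hfix, hs1⟩ := exists_mem_GP_fix_restr_ne_one (P := P) hd
  set N := Nat.card P ^ S.card
  have hlt : N < Nat.card (levelPatternProds N).range :=
    lt_card_range_levelPatternProds hs hfix hs1 N
  have hle : Nat.card (levelPatternProds N).range ≤ N :=
    card_range_le_of_dense hSG hdense _ Nat.card_pos (fun _ => funext fun _ => pow_card_eq_one')
      (L := N + d) fun g h H => funext fun i =>
        levelPatternProd_congr _ fun w hw => H w (by have := i.2; omega)
  exact hle.not_gt hlt

/-- for an abelian pattern group `P`, the group `G_P` is topologically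
finitely generated iff it is finite. -/
theorem statement18 {X : Type*} [Fintype X] [Nontrivial X] (d : ℕ) (hd : 1 ≤ d)
    (P : Subgroup (Pat X d)) (hP : P ≤ finAut X d)
    (hab : ∀ a ∈ P, ∀ b ∈ P, a * b = b * a) :
    TopFG (GP X d P) ↔ Finite ↥(GP X d P) :=
  statement18_general d hd P hab
end
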